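/- Let u_n denote the number of uniquely closable Motzkin trees with exactly n nodes, and let b_n denote the number of Motzkin trees with exactly n nodes containing no unary node l. Then u_0 = 0, u_1 = 0, and for every n ≥ 2, u_n = b_{n-1} + Σ_{i+j=n-1, i≥1, j≥1} u_i · u_j; moreover b_1 = 1, b_0 = 0, and for every n ≥ 2, b_n = Σ_{i+j=n-1, i≥1, j≥1} b_i · b_j. -/

import Mathlib

/-- Motzkin trees (binary-unary trees): leaf `v`, unary `l`, binary `a`. -/
inductive Mot : Type
  | v : Mot
  | l : Mot → Mot
  | a : Mot → Mot → Mot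
deriving DecidableEq

/-- Lambda terms in de Bruijn form. -/
inductive Lam : Type
  | v : Nat → Lam
  | l : Lam → Lam
  | a : Lam → Lam → Lam
deriving DecidableEq

/-- `t` is closed at depth `d`. -/
def Lam.closedAt : Lam → Nat → Prop
  | .v i, d => i < d
  | .l t, d => t.closedAt (d + 1)
  | .a s t, d => s.closedAt d ∧ t.closedAt d

/-- The Motzkin-tree skeleton of a de Bruijn term. -/
def Lam.skel : Lam → Mot
  | .v _ => .v
  | .l t => .l t.skel
  | .a s t => .a s.skel t.skel

/-- Total node count of a Motzkin tree. -/
def Mot.nodes : Mot → ℕ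
  | .v => 1
  | .l t => 1 + t.nodes
  | .a s t => 1 + s.nodes + t.nodes

/-- A Motzkin tree is uniquely closable if exactly one closed term has it as skeleton. -/
def Mot.UniquelyClosable (X : Mot) : Prop := ∃! t : Lam, t.closedAt 0 ∧ t.skel = X

/-- A Motzkin tree contains no unary node `l`. -/
def Mot.LFree : Mot → Prop
  | .v => True
  | .l _ => False
  | .a s t => s.LFree ∧ t.LFree

/-- `u n` is the number of uniquely closable Motzkin trees with exactly `n` nodes. -/
noncomputable def u (n : ℕ) : ℕ := Nat.card {t : Mot // t.nodes = n ∧ t.UniquelyClosable}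

/-- `b n` is the number of `l`-free Motzkin trees with exactly `n` nodes. -/
noncomputable def b (n : ℕ) : ℕ := Nat.card {t : Mot // t.nodes = n ∧ t.LFree}

/-!
A closed term with skeleton `X` is `X` with a de Bruijn index below the current binding depth
at each leaf. Unique closability at depth `d` therefore passes componentwise through an
application and to depth `d + 1` under an abstraction. At depth `≥ 2` no tree is uniquely
closable (label every leaf `0`, or every leaf `1`), while at depth `1` exactly the `l`-free
trees are, the only choice being index `0`. Hence a uniquely closable tree is either `l X` with
`X` an `l`-free tree or an application of two uniquely closable trees, and counting both
families by node number gives the two convolution recurrences.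
-/

open Finset

namespace Mot

def fill (k : ℕ) : Mot → Lam
  | v => .v k
  | l t => .l (t.fill k)
  | a s t => .a (s.fill k) (t.fill k)

@[simp]
lemma skel_fill (k : ℕ) (X : Mot) : (X.fill k).skel = X := by
  induction X <;> simp [fill, Lam.skel, *]

lemma closedAt_fill {k d : ℕ} (hk : k < d) (X : Mot) : (X.fill k).closedAt d := by
  induction X generalizing d with
  | v => exact hk
  | l t ih => exact ih (by omega)
  | a s t ihs iht => exact ⟨ihs hk, iht hk⟩

lemma fill_left_injective (X : Mot) : Function.Injective fun k => X.fill k := by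
  intro k k' h
  induction X with
  | v => exact Lam.v.inj h
  | l t ih => exact ih (Lam.l.inj h)
  | a s t ihs _ => exact ihs (Lam.a.inj h).1

def UniquelyClosableAt (X : Mot) (d : ℕ) : Prop := ∃! t : Lam, t.closedAt d ∧ t.skel = X

lemma uniquelyClosable_iff_uniquelyClosableAt_zero {X : Mot} :
    X.UniquelyClosable ↔ X.UniquelyClosableAt 0 :=
  Iff.rfl

lemma not_uniquelyClosableAt_of_two_le {d : ℕ} (hd : 2 ≤ d) (X : Mot) :
    ¬ X.UniquelyClosableAt d := by
  rintro ⟨t, -, huniq⟩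
  have h0 := huniq _ ⟨closedAt_fill (by omega : 0 < d) X, skel_fill 0 X⟩
  have h1 := huniq _ ⟨closedAt_fill (by omega : 1 < d) X, skel_fill 1 X⟩
  exact zero_ne_one (X.fill_left_injective (h0.trans h1.symm))

lemma uniquelyClosableAt_v_iff {d : ℕ} : v.UniquelyClosableAt d ↔ d = 1 := by
  constructor
  · intro hu
    have hd : d < 2 := by
      by_contra h
      exact not_uniquelyClosableAt_of_two_le (by omega) v hu
    obtain ⟨_ | _ | _, ⟨hc, hs⟩, -⟩ := hu <;> simp only [Lam.skel, reduceCtorEq] at hs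
    simp only [Lam.closedAt] at hc
    omega
  · rintro rfl
    refine ⟨.v 0, ⟨zero_lt_one, rfl⟩, ?_⟩
    rintro (i | _ | _) ⟨hc, hs⟩ <;> simp only [Lam.skel, reduceCtorEq] at hs
    simp only [Lam.closedAt] at hc
    rw [Nat.lt_one_iff.mp hc]

lemma uniquelyClosableAt_l_iff {Y : Mot} {d : ℕ} :
    (l Y).UniquelyClosableAt d ↔ Y.UniquelyClosableAt (d + 1) := by
  constructor
  · rintro ⟨_ | p | _, ⟨hc, hs⟩, huniq⟩ <;>
      simp only [Lam.skel, reduceCtorEq, l.injEq] at hs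
    refine ⟨p, ⟨hc, hs⟩, fun p' hp' => ?_⟩
    exact Lam.l.inj (huniq (.l p') ⟨hp'.1, congrArg l hp'.2⟩)
  · rintro ⟨p, hp, huniq⟩
    refine ⟨.l p, ⟨hp.1, congrArg l hp.2⟩, ?_⟩
    rintro (_ | p' | _) ⟨hc, hs⟩ <;> simp only [Lam.skel, reduceCtorEq, l.injEq] at hs
    exact congrArg Lam.l (huniq p' ⟨hc, hs⟩)

lemma uniquelyClosableAt_a_iff {S T : Mot} {d : ℕ} :
    (a S T).UniquelyClosableAt d ↔ S.UniquelyClosableAt d ∧ T.UniquelyClosableAt d := by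
  constructor
  · rintro ⟨_ | _ | ⟨p, q⟩, ⟨hc, hs⟩, huniq⟩ <;>
      simp only [Lam.skel, reduceCtorEq, a.injEq] at hs
    obtain ⟨hp, hq⟩ := hc
    refine ⟨⟨p, ⟨hp, hs.1⟩, fun p' hp' => ?_⟩,
      ⟨q, ⟨hq, hs.2⟩, fun q' hq' => ?_⟩⟩
    · exact (Lam.a.inj (huniq (.a p' q) ⟨⟨hp'.1, hq⟩, by rw [Lam.skel, hp'.2, hs.2]⟩)).1
    · exact (Lam.a.inj (huniq (.a p q') ⟨⟨hp, hq'.1⟩, by rw [Lam.skel, hs.1, hq'.2]⟩)).2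
  · rintro ⟨⟨p, hp, hpu⟩, ⟨q, hq, hqu⟩⟩
    refine ⟨.a p q, ⟨⟨hp.1, hq.1⟩, by rw [Lam.skel, hp.2, hq.2]⟩, ?_⟩
    rintro (_ | _ | ⟨p', q'⟩) ⟨hc, hs⟩ <;>
      simp only [Lam.skel, reduceCtorEq, a.injEq] at hs
    rw [hpu p' ⟨hc.1, hs.1⟩, hqu q' ⟨hc.2, hs.2⟩]

lemma uniquelyClosableAt_one_iff {X : Mot} : X.UniquelyClosableAt 1 ↔ X.LFree := by
  induction X with
  | v => simp [uniquelyClosableAt_v_iff, LFree]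
  | l Y _ =>
    simp [uniquelyClosableAt_l_iff, LFree, not_uniquelyClosableAt_of_two_le le_rfl]
  | a S T ihS ihT => rw [uniquelyClosableAt_a_iff, ihS, ihT, LFree]

lemma not_uniquelyClosable_v : ¬ v.UniquelyClosable := by
  simp [uniquelyClosable_iff_uniquelyClosableAt_zero, uniquelyClosableAt_v_iff]

lemma uniquelyClosable_l_iff {Y : Mot} : (l Y).UniquelyClosable ↔ Y.LFree := by
  rw [uniquelyClosable_iff_uniquelyClosableAt_zero, uniquelyClosableAt_l_iff,
    uniquelyClosableAt_one_iff]

lemma uniquelyClosable_a_iff {S T : Mot} :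
    (a S T).UniquelyClosable ↔ S.UniquelyClosable ∧ T.UniquelyClosable :=
  uniquelyClosableAt_a_iff

lemma one_le_nodes (t : Mot) : 1 ≤ t.nodes := by
  cases t <;> simp only [nodes] <;> omega

lemma l_injective : Function.Injective l := fun _ _ h => l.inj h

lemma a_uncurry_injective : Function.Injective fun q : Mot × Mot => a q.1 q.2 :=
  fun _ _ h => Prod.ext (a.inj h).1 (a.inj h).2

def ofNodes : ℕ → Finset Mot
  | 0 => ∅
  | 1 => {v}
  | n + 2 => (ofNodes (n + 1)).map ⟨l, l_injective⟩ ∪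
      (antidiagonal (n + 1)).attach.biUnion fun p =>
        (ofNodes p.1.1 ×ˢ ofNodes p.1.2).map ⟨_, a_uncurry_injective⟩
  decreasing_by
    · omega
    all_goals have := mem_antidiagonal.mp p.2; omega

lemma mem_ofNodes {t : Mot} {n : ℕ} : t ∈ ofNodes n ↔ t.nodes = n := by
  induction t generalizing n with
  | v => rcases n with _ | _ | n <;> simp [ofNodes, nodes]
  | l t ih =>
    rcases n with _ | _ | n
    all_goals simp [ofNodes, nodes, ih]
    all_goals have := t.one_le_nodes; omega
  | a s t ihs iht =>
    rcases n with _ | _ | n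
    all_goals simp [ofNodes, nodes, ihs, iht]
    all_goals have := s.one_le_nodes; have := t.one_le_nodes; omega

lemma natCard_eq_card_filter_ofNodes (P : Mot → Prop) [DecidablePred P] (n : ℕ) :
    Nat.card {t : Mot // t.nodes = n ∧ P t} = #{t ∈ ofNodes n | P t} := by
  rw [← Nat.card_eq_finsetCard]
  exact Nat.card_congr (Equiv.subtypeEquivRight fun t => by simp [mem_ofNodes])

lemma card_filter_ofNodes_add_two (P : Mot → Prop) [DecidablePred P] (n : ℕ) :
    #{t ∈ ofNodes (n + 2) | P t} = #{t ∈ ofNodes (n + 1) | P (l t)} +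
      ∑ p ∈ antidiagonal (n + 1), #{q ∈ ofNodes p.1 ×ˢ ofNodes p.2 | P (a q.1 q.2)} := by
  rw [ofNodes, filter_union, card_union_of_disjoint, filter_map, card_map, filter_biUnion,
    card_biUnion, ← sum_attach (antidiagonal (n + 1))]
  · simp only [filter_map, card_map]
    rfl
  · intro p _ p' _ hpp'
    simp only [Function.onFun, disjoint_left, mem_filter, mem_map, mem_product,
      Function.Embedding.coeFn_mk]
    rintro _ ⟨⟨q, ⟨hq, -⟩, rfl⟩, -⟩ ⟨⟨q', ⟨hq', -⟩, hqq'⟩, -⟩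
    rw [mem_ofNodes] at hq hq'
    rw [(a.inj hqq').1] at hq'
    have := mem_antidiagonal.mp p.2
    have := mem_antidiagonal.mp p'.2
    exact hpp' (Subtype.ext (Prod.ext (hq.symm.trans hq') (by omega)))
  · simp [disjoint_left]

lemma natCard_nodes_zero (P : Mot → Prop) : Nat.card {t : Mot // t.nodes = 0 ∧ P t} = 0 := by
  classical
  simp [natCard_eq_card_filter_ofNodes, ofNodes]

lemma natCard_nodes_one (P : Mot → Prop) [DecidablePred P] :
    Nat.card {t : Mot // t.nodes = 1 ∧ P t} = if P v then 1 else 0 := by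
  rw [natCard_eq_card_filter_ofNodes, ofNodes, filter_singleton]
  split_ifs <;> rfl

lemma natCard_nodes_add_two (P : Mot → Prop) (hP : ∀ s t, P (a s t) ↔ P s ∧ P t) (n : ℕ) :
    Nat.card {t : Mot // t.nodes = n + 2 ∧ P t} =
      Nat.card {t : Mot // t.nodes = n + 1 ∧ P (l t)} +
        ∑ p ∈ antidiagonal (n + 1), Nat.card {t : Mot // t.nodes = p.1 ∧ P t} *
          Nat.card {t : Mot // t.nodes = p.2 ∧ P t} := by
  classical
  simp only [natCard_eq_card_filter_ofNodes, card_filter_ofNodes_add_two, hP, filter_product,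
    card_product]

end Mot

open Mot

lemma u_zero : u 0 = 0 := natCard_nodes_zero _

lemma b_zero : b 0 = 0 := natCard_nodes_zero _

lemma u_one : u 1 = 0 := by
  classical
  simp [u, natCard_nodes_one, not_uniquelyClosable_v]

lemma b_one : b 1 = 1 := by
  classical
  simp [b, natCard_nodes_one, LFree]

lemma u_add_two (n : ℕ) :
    u (n + 2) = b (n + 1) + ∑ p ∈ antidiagonal (n + 1), u p.1 * u p.2 := by
  simp only [u, b, natCard_nodes_add_two _ fun _ _ => uniquelyClosable_a_iff,
    uniquelyClosable_l_iff]

lemma b_add_two (n : ℕ) : b (n + 2) = ∑ p ∈ antidiagonal (n + 1), b p.1 * b p.2 := by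
  simp [b, natCard_nodes_add_two LFree fun _ _ => Iff.rfl, LFree]

lemma sum_filter_one_le_antidiagonal {f : ℕ → ℕ} (hf : f 0 = 0) (n : ℕ) :
    ∑ p ∈ (antidiagonal n).filter (fun p => 1 ≤ p.1 ∧ 1 ≤ p.2), f p.1 * f p.2 =
      ∑ p ∈ antidiagonal n, f p.1 * f p.2 := by
  refine sum_filter_of_ne fun p _ hp => ⟨?_, ?_⟩ <;> by_contra! h
  · simp [Nat.lt_one_iff.mp h, hf] at hp
  · simp [Nat.lt_one_iff.mp h, hf] at hp

theorem stmt8 :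
    u 0 = 0 ∧ u 1 = 0 ∧
    (∀ n : ℕ, 2 ≤ n →
      u n = b (n - 1) +
        ∑ p ∈ (Finset.HasAntidiagonal.antidiagonal (n - 1)).filter (fun p => 1 ≤ p.1 ∧ 1 ≤ p.2),
          u p.1 * u p.2) ∧
    b 1 = 1 ∧ b 0 = 0 ∧
    (∀ n : ℕ, 2 ≤ n →
      b n =
        ∑ p ∈ (Finset.HasAntidiagonal.antidiagonal (n - 1)).filter (fun p => 1 ≤ p.1 ∧ 1 ≤ p.2),
          b p.1 * b p.2) := by
  refine ⟨u_zero, u_one, fun n hn => ?_, b_one, b_zero, fun n hn => ?_⟩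
  all_goals obtain ⟨m, rfl⟩ := Nat.exists_eq_add_of_le' hn
  · rw [sum_filter_one_le_antidiagonal u_zero, u_add_two]
    rfl
  · rw [sum_filter_one_le_antidiagonal b_zero, b_add_two]
    rfl
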